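/- For every ν ∈ ℝ and z, w > 0, K_ν(z) K_ν(w) = (1/2) ∫_0^∞ (1/v) exp(-1/(2v)) exp(-(z² + w²) v / 2) K_ν(zwv) dv, where K_ν(a) := (1/2) ∫_ℝ exp(-a cosh x - ν x) dx for a > 0. -/

import Mathlib

/-!
The product of the two integrals is the integral of the convolution of the integrands. Since
`z cosh u + w cosh (x - u) = A cosh (u - u₀)` with `A² = z² + w² + 2 z w cosh x`, the convolution
at `x` equals `e^{-ν x} ∫ e^{-A cosh t} dt`. The substitution `v = eᵗ / A` turns this integral into
`∫₀^∞ v⁻¹ e^{-1/(2v) - A² v / 2} dv`, and as `A² v / 2 = (z² + w²) v / 2 + z w v cosh x`, exchanging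
the (positive) integrals over `x` and `v` gives the right-hand side.
-/

open MeasureTheory Real Set

open scoped Convolution

lemma sq_div_four_le_cosh (x : ℝ) : x ^ 2 / 4 ≤ cosh x := by
  rw [← cosh_abs, cosh_eq]
  have := quadratic_le_exp_of_nonneg (abs_nonneg x)
  linarith [exp_pos (-|x|), abs_nonneg x, sq_abs x]

lemma integrable_exp_neg_mul_cosh_sub_mul {a : ℝ} (ha : 0 < a) (ν : ℝ) :
    Integrable fun x : ℝ => exp (-a * cosh x - ν * x) := by
  refine ((integrable_exp_neg_mul_sq (b := a / 8) (by positivity)).const_mul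
    (exp (2 * ν ^ 2 / a))).mono' (by fun_prop) (ae_of_all _ fun x => ?_)
  rw [norm_of_nonneg (exp_pos _).le, ← exp_add, exp_le_exp]
  have hsq : a / 8 * x ^ 2 + ν * x + 2 * ν ^ 2 / a = a / 8 * (x + 4 * ν / a) ^ 2 := by
    field_simp
    ring
  nlinarith [sq_div_four_le_cosh x, sq_nonneg (x + 4 * ν / a)]

lemma abs_sinh_lt_cosh (x : ℝ) : |sinh x| < cosh x :=
  abs_lt.2 ⟨by linarith [sinh_lt_cosh (-x), sinh_neg x, cosh_neg x], sinh_lt_cosh x⟩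

lemma mul_cosh_add_mul_sinh {a b : ℝ} (hab : |b| < a) (u : ℝ) :
    a * cosh u + b * sinh u = √(a ^ 2 - b ^ 2) * cosh (u + arsinh (b / √(a ^ 2 - b ^ 2))) := by
  have ha : 0 < a := (abs_nonneg b).trans_lt hab
  have hd : 0 < a ^ 2 - b ^ 2 := by nlinarith [abs_nonneg b, sq_abs b]
  set c := √(a ^ 2 - b ^ 2)
  have hc : 0 < c := sqrt_pos.2 hd
  have hcc : c ^ 2 = a ^ 2 - b ^ 2 := sq_sqrt hd.le
  have hca : c * √(1 + (b / c) ^ 2) = a := by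
    have hsq : c ^ 2 * (1 + (b / c) ^ 2) = a ^ 2 := by
      field_simp
      linarith
    rw [← sqrt_sq ha.le, ← hsq, sqrt_mul (sq_nonneg c), sqrt_sq hc.le]
  rw [cosh_add, cosh_arsinh, sinh_arsinh, ← hca]
  field_simp

lemma integral_exp_neg_mul_cosh_add_mul_sinh {a b : ℝ} (hab : |b| < a) :
    ∫ u, exp (-(a * cosh u + b * sinh u)) = ∫ t, exp (-√(a ^ 2 - b ^ 2) * cosh t) := by
  simp_rw [mul_cosh_add_mul_sinh hab, ← neg_mul]
  exact integral_add_right_eq_self (fun t => exp (-√(a ^ 2 - b ^ 2) * cosh t)) _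

lemma convolution_exp_neg_mul_cosh {z w : ℝ} (hz : 0 < z) (hw : 0 < w) (ν x : ℝ) :
    ((fun u => exp (-z * cosh u - ν * u)) ⋆ fun u => exp (-w * cosh u - ν * u)) x
      = exp (-ν * x) * ∫ t, exp (-√(z ^ 2 + w ^ 2 + 2 * z * w * cosh x) * cosh t) := by
  have hab : |-(w * sinh x)| < z + w * cosh x := by
    rw [abs_neg, abs_mul, abs_of_pos hw]
    nlinarith [abs_sinh_lt_cosh x]
  have hdisc : (z + w * cosh x) ^ 2 - (-(w * sinh x)) ^ 2 = z ^ 2 + w ^ 2 + 2 * z * w * cosh x := by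
    linear_combination w ^ 2 * cosh_sq_sub_sinh_sq x
  rw [convolution_def, ← hdisc, ← integral_exp_neg_mul_cosh_add_mul_sinh hab, ← integral_const_mul]
  congr 1 with u
  rw [ContinuousLinearMap.lsmul_apply, smul_eq_mul, ← exp_add, ← exp_add, cosh_sub]
  congr 1
  ring

section ExpDivSubstitution

variable {E : Type*} [NormedAddCommGroup E] [NormedSpace ℝ E] {A : ℝ}

lemma range_exp_div (hA : 0 < A) : range (fun t => exp t / A) = Ioi 0 := by
  ext v
  refine ⟨?_, fun hv => ⟨log (A * v), ?_⟩⟩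
  · rintro ⟨t, rfl⟩
    exact div_pos (exp_pos t) hA
  · simp only [exp_log (mul_pos hA hv), mul_div_cancel_left₀ _ hA.ne']

lemma injective_exp_div (hA : 0 < A) : Function.Injective fun t => exp t / A :=
  fun _ _ h => exp_injective ((div_left_inj' hA.ne').1 h)

lemma integral_Ioi_eq_integral_exp_div_smul (hA : 0 < A) (g : ℝ → E) :
    ∫ v in Ioi 0, g v = ∫ t, (exp t / A) • g (exp t / A) := by
  simpa [← range_exp_div hA, abs_div, abs_of_pos hA] using
    integral_image_eq_integral_abs_deriv_smul MeasurableSet.univ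
      (fun t _ => ((hasDerivAt_exp t).div_const A).hasDerivWithinAt)
      (injective_exp_div hA).injOn g

lemma integrableOn_Ioi_iff_integrable_exp_div_smul (hA : 0 < A) (g : ℝ → E) :
    IntegrableOn g (Ioi 0) ↔ Integrable fun t => (exp t / A) • g (exp t / A) := by
  simpa [← range_exp_div hA, abs_div, abs_of_pos hA] using
    integrableOn_image_iff_integrableOn_abs_deriv_smul MeasurableSet.univ
      (fun t _ => ((hasDerivAt_exp t).div_const A).hasDerivWithinAt)
      (injective_exp_div hA).injOn g

end ExpDivSubstitution

lemma exp_div_mul_one_div_mul_exp {A : ℝ} (hA : 0 < A) (t : ℝ) :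
    exp t / A * (1 / (exp t / A) * exp (-1 / (2 * (exp t / A)) - A ^ 2 / 2 * (exp t / A)))
      = exp (-A * cosh t) := by
  rw [← mul_assoc, mul_one_div_cancel (by positivity), one_mul, cosh_eq, exp_neg]
  congr 1
  field_simp
  ring

lemma integrableOn_one_div_mul_exp_neg_div_sub_mul {A : ℝ} (hA : 0 < A) :
    IntegrableOn (fun v : ℝ => 1 / v * exp (-1 / (2 * v) - A ^ 2 / 2 * v)) (Ioi 0) := by
  rw [integrableOn_Ioi_iff_integrable_exp_div_smul hA]
  simp_rw [smul_eq_mul, exp_div_mul_one_div_mul_exp hA]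
  simpa using integrable_exp_neg_mul_cosh_sub_mul hA 0

lemma integral_one_div_mul_exp_neg_div_sub_mul {A : ℝ} (hA : 0 < A) :
    ∫ v in Ioi 0, 1 / v * exp (-1 / (2 * v) - A ^ 2 / 2 * v) = ∫ t, exp (-A * cosh t) := by
  rw [integral_Ioi_eq_integral_exp_div_smul hA]
  simp_rw [smul_eq_mul, exp_div_mul_one_div_mul_exp hA]

lemma integral_integral_swap_of_nonneg {α β : Type*} [MeasurableSpace α] [MeasurableSpace β]
    {μ : Measure α} {ν : Measure β} [SFinite μ] [SFinite ν] {F : α → β → ℝ}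
    (hF : AEStronglyMeasurable (Function.uncurry F) (μ.prod ν))
    (hF_nonneg : ∀ᵐ x ∂μ, ∀ᵐ y ∂ν, 0 ≤ F x y) (hF_int : ∀ᵐ x ∂μ, Integrable (F x) ν)
    (hF_int_int : Integrable (fun x => ∫ y, F x y ∂ν) μ) :
    ∫ x, ∫ y, F x y ∂ν ∂μ = ∫ y, ∫ x, F x y ∂μ ∂ν := by
  refine integral_integral_swap ((integrable_prod_iff hF).2 ⟨hF_int, hF_int_int.congr ?_⟩)
  filter_upwards [hF_nonneg] with x hx
  exact integral_congr_ae (hx.mono fun y hy => (norm_of_nonneg hy).symm)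

theorem stmt_6 (ν z w : ℝ) (hz : 0 < z) (hw : 0 < w) :
    ((1 / 2) * ∫ x : ℝ, Real.exp (-z * Real.cosh x - ν * x)) *
        ((1 / 2) * ∫ x : ℝ, Real.exp (-w * Real.cosh x - ν * x))
      = (1 / 2) * ∫ v in Ioi (0:ℝ),
          (1 / v) * Real.exp (-1 / (2 * v)) * Real.exp (-(z ^ 2 + w ^ 2) * v / 2) *
            ((1 / 2) * ∫ x : ℝ, Real.exp (-(z * w * v) * Real.cosh x - ν * x)) := by
  set f : ℝ → ℝ := fun u => exp (-z * cosh u - ν * u)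
  set g : ℝ → ℝ := fun u => exp (-w * cosh u - ν * u)
  have hf : Integrable f := integrable_exp_neg_mul_cosh_sub_mul hz ν
  have hg : Integrable g := integrable_exp_neg_mul_cosh_sub_mul hw ν
  have hdisc : ∀ x, 0 < z ^ 2 + w ^ 2 + 2 * z * w * cosh x := fun x => by
    nlinarith [one_le_cosh x, mul_pos hz hw]
  set A : ℝ → ℝ := fun x => √(z ^ 2 + w ^ 2 + 2 * z * w * cosh x)
  have hA : ∀ x, 0 < A x := fun x => sqrt_pos.2 (hdisc x)
  set H : ℝ → ℝ → ℝ := fun x v => exp (-ν * x) * (1 / v * exp (-1 / (2 * v) - A x ^ 2 / 2 * v))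
  have hfg : ∀ x, (f ⋆ g) x = ∫ v in Ioi 0, H x v := fun x => by
    rw [convolution_exp_neg_mul_cosh hz hw, integral_const_mul,
      integral_one_div_mul_exp_neg_div_sub_mul (hA x)]
  have hswap : ∫ x, ∫ v in Ioi 0, H x v = ∫ v in Ioi 0, ∫ x, H x v :=
    integral_integral_swap_of_nonneg (by fun_prop)
      (ae_of_all _ fun x =>
        (ae_restrict_mem measurableSet_Ioi).mono fun v (hv : 0 < v) => by positivity)
      (ae_of_all _ fun x => (integrableOn_one_div_mul_exp_neg_div_sub_mul (hA x)).const_mul _)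
      ((hf.integrable_convolution _ hg).congr (ae_of_all _ hfg))
  have hrhs : ∀ v ∈ Ioi (0 : ℝ), 1 / v * exp (-1 / (2 * v)) * exp (-(z ^ 2 + w ^ 2) * v / 2) *
      ((1 / 2) * ∫ x, exp (-(z * w * v) * cosh x - ν * x)) = (1 / 2) * ∫ x, H x v := by
    intro v _
    rw [mul_left_comm, ← integral_const_mul]
    congr 2 with x
    simp only [H, A, sq_sqrt (hdisc x).le]
    rw [mul_assoc, mul_assoc, ← exp_add, ← exp_add, mul_left_comm, ← exp_add]
    congr 2
    ring
  rw [setIntegral_congr_fun measurableSet_Ioi hrhs, integral_const_mul, ← hswap]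
  simp_rw [← hfg]
  rw [integral_convolution _ hf hg]
  simp only [ContinuousLinearMap.lsmul_apply, smul_eq_mul]
  ring
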